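/- arXiv:cs/0612007 — 6 statements merged into one kernel-verified Lean document; each statement's English description precedes it below -/
import Mathlib

section
/- Define S_M = ∑_{j=1}^{M-1} j/(M-j) for integers M ≥ 1 (so S_1 = 0). Then S_M ≤ M·log M for all M ≥ 1, and lim_{M→∞} S_M/(M·log M) = 1, where log is the natural logarithm. -/
open Finset Filter

/-!
Reindexing by `j ↦ M - j` turns `S M` into `∑_{i=1}^{M-1} (M - i)/i = M (H_M - 1)`, where `H_M` is
the `M`-th harmonic number. The bound is then `H_M ≤ 1 + log M`, and the limit holds because
`H_M - log M` converges (to Euler's constant), so `(H_M - 1) / log M → 1`.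
-/

lemma sum_Icc_div_sub_eq_mul_harmonic_sub_one (M : ℕ) :
    ∑ j ∈ Icc 1 (M - 1), (j : ℝ) / (M - j) = M * (harmonic M - 1) := by
  have reflect : ∑ j ∈ Icc 1 (M - 1), (j : ℝ) / (M - j)
      = ∑ i ∈ Icc 1 (M - 1), ((M : ℝ) - i) / i := by
    refine sum_nbij' (M - ·) (M - ·) ?_ ?_ ?_ ?_ ?_ <;> intro j hj <;> simp only [mem_Icc] at hj ⊢
    all_goals try omega
    rw [Nat.cast_sub (by omega)]; ring
  have extend : ∑ i ∈ Icc 1 M, ((M : ℝ) - i) / i = ∑ i ∈ Icc 1 (M - 1), ((M : ℝ) - i) / i := by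
    rcases M with _ | n
    · rfl
    · rw [sum_Icc_succ_top (by omega)]; simp
  rw [reflect, ← extend, harmonic_eq_sum_Icc]
  calc ∑ i ∈ Icc 1 M, ((M : ℝ) - i) / i = ∑ i ∈ Icc 1 M, ((M : ℝ) * (i : ℝ)⁻¹ - 1) := by
        refine sum_congr rfl fun i hi => ?_
        have : (i : ℝ) ≠ 0 := by have := (mem_Icc.1 hi).1; positivity
        field_simp
    _ = _ := by simp [sum_sub_distrib, mul_sum, mul_sub]

lemma tendsto_harmonic_sub_one_div_log :
    Tendsto (fun n : ℕ => ((harmonic n : ℝ) - 1) / Real.log n) atTop (nhds 1) := by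
  have hlog : Tendsto (fun n : ℕ => (Real.log n)⁻¹) atTop (nhds 0) :=
    (Real.tendsto_log_atTop.comp tendsto_natCast_atTop_atTop).inv_tendsto_atTop
  have h := ((Real.tendsto_harmonic_sub_log.sub_const 1).mul hlog).const_add 1
  rw [mul_zero, add_zero] at h
  refine h.congr' ?_
  filter_upwards [eventually_ge_atTop 2] with n hn
  have : Real.log n ≠ 0 := (Real.log_pos (by exact_mod_cast hn)).ne'
  field_simp
  ring

/-- With `S M = ∑_{j=1}^{M-1} j/(M-j)`: `S M ≤ M log M` for all `M ≥ 1`, and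
`S M / (M log M) → 1` as `M → ∞`. -/
theorem stmt_2 (S : ℕ → ℝ)
    (hS : ∀ M : ℕ, S M = ∑ j ∈ Finset.Icc 1 (M - 1), (j : ℝ) / ((M : ℝ) - (j : ℝ))) :
    (∀ M : ℕ, 1 ≤ M → S M ≤ (M : ℝ) * Real.log M) ∧
      Tendsto (fun M : ℕ => S M / ((M : ℝ) * Real.log M)) atTop (nhds 1) := by
  simp only [hS, sum_Icc_div_sub_eq_mul_harmonic_sub_one]
  refine ⟨fun M _ => ?_, ?_⟩
  · exact mul_le_mul_of_nonneg_left (by linarith [harmonic_le_one_add_log M]) M.cast_nonneg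
  · refine tendsto_harmonic_sub_one_div_log.congr' ?_
    filter_upwards [eventually_ne_atTop 0] with M hM
    rw [mul_div_mul_left _ _ (Nat.cast_ne_zero.2 hM)]
end

section
/- Let M, K, N be positive integers with N > 1 and M = αKN for an integer α > 1 (so M ≥ KN). Then [∑_{j=1}^{KN-1} j/(M-j)] - [∑_{k=0}^{K-1} ∑_{n=0}^{N-1} ∑_{i=kN+1}^{(K-1)N} 1/(M-n-i)] = ∑_{i=1}^{N-1} K(N-i)/((α-1)KN + i). -/
/-!
With `f j = 1 / (M - j)`, Abel summation writes the zero-forcing sum `∑ j f j` as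
`∑_{m < KN} ∑_{m < j < KN} f j`. Indexing `m = kN + n`, the `(k, n)` block of the
block-diagonalization sum is the part of the inner sum with `j ≤ (K - 1)N + n`, so the
difference leaves the tail `∑_{(K-1)N + n < j < KN} f j`, which does not depend on `k`.
Summing these tails over `n` by Abel summation again and reflecting `r = N - i` gives the
right-hand side, since `M - (KN - i) = (α - 1)KN + i`.
-/

open Finset

namespace Finset

variable {G : Type*}

theorem sum_range_sum_Ioo_eq_sum_range_nsmul [AddCommMonoid G] (f : ℕ → G) (n : ℕ) :
    ∑ m ∈ range n, ∑ j ∈ Ioo m n, f j = ∑ j ∈ range n, j • f j := by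
  rw [sum_comm' (t' := range n) (s' := range)]
  · simp only [sum_const, card_range]
  · intro m j
    simp only [mem_range, mem_Ioo]
    omega

theorem sum_range_mul_eq_sum_sum_range [AddCommMonoid G] (g : ℕ → G) (K N : ℕ) :
    ∑ m ∈ range (K * N), g m = ∑ k ∈ range K, ∑ n ∈ range N, g (k * N + n) := by
  induction K with
  | zero => simp
  | succ K ih => rw [sum_range_succ, ← ih, Nat.succ_mul, sum_range_add]

theorem sum_Icc_one_sub_one_nsmul [AddCommMonoid G] (g : ℕ → G) (n : ℕ) :
    ∑ r ∈ Icc 1 (n - 1), r • g r = ∑ r ∈ range n, r • g r := by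
  refine sum_subset (fun r hr => ?_) fun r hr hr' => ?_
  · simp only [mem_Icc, mem_range] at hr ⊢
    omega
  · obtain rfl : r = 0 := by simp only [mem_Icc, mem_range] at hr hr'; omega
    exact zero_smul ℕ _

theorem sum_range_nsmul_eq_sum_Icc_reflect [AddCommMonoid G] (g : ℕ → G) (N : ℕ) :
    ∑ r ∈ range N, r • g r = ∑ i ∈ Icc 1 (N - 1), (N - i) • g (N - i) := by
  have hinv : ∀ r ∈ Icc 1 (N - 1), N - r ∈ Icc 1 (N - 1) ∧ N - (N - r) = r := by
    intro r hr
    simp only [mem_Icc] at hr ⊢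
    omega
  rw [← sum_Icc_one_sub_one_nsmul]
  exact sum_nbij' (N - ·) (N - ·) (fun r hr => (hinv r hr).1) (fun r hr => (hinv r hr).1)
    (fun r hr => (hinv r hr).2) (fun r hr => (hinv r hr).2) fun r hr => by rw [(hinv r hr).2]

theorem sum_Ioo_sub_sum_Icc_add_left [AddCommGroup G] (f : ℕ → G) {K N k n : ℕ}
    (hk : k < K) (hn : n < N) :
    ∑ j ∈ Ioo (k * N + n) (K * N), f j - ∑ i ∈ Icc (k * N + 1) ((K - 1) * N), f (n + i)
      = ∑ r ∈ Ioo n N, f ((K - 1) * N + r) := by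
  have hKN : (K - 1) * N + N = K * N := by
    rw [← Nat.succ_mul, Nat.succ_eq_add_one, Nat.sub_add_cancel (by omega)]
  have hkN : k * N ≤ (K - 1) * N := Nat.mul_le_mul_right N (by omega)
  have hsplit : Ioo (k * N + n) (K * N)
      = Icc (n + (k * N + 1)) (n + (K - 1) * N) ∪ Ioo ((K - 1) * N + n) ((K - 1) * N + N) := by
    ext j
    simp only [mem_Ioo, mem_Icc, mem_union]
    omega
  have hdisj : Disjoint (Icc (n + (k * N + 1)) (n + (K - 1) * N))
      (Ioo ((K - 1) * N + n) ((K - 1) * N + N)) := by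
    rw [disjoint_left]
    intro j
    simp only [mem_Ioo, mem_Icc]
    omega
  rw [hsplit, sum_union hdisj, ← map_add_left_Icc, ← map_add_left_Ioo, sum_map, sum_map]
  simp only [addLeftEmbedding_apply, add_sub_cancel_left]

theorem sum_range_nsmul_sub_sum_blocks [AddCommGroup G] (f : ℕ → G) (K N : ℕ) :
    ∑ j ∈ range (K * N), j • f j
      - ∑ k ∈ range K, ∑ n ∈ range N, ∑ i ∈ Icc (k * N + 1) ((K - 1) * N), f (n + i)
      = K • ∑ r ∈ range N, r • f ((K - 1) * N + r) := by
  rw [← sum_range_sum_Ioo_eq_sum_range_nsmul, sum_range_mul_eq_sum_sum_range,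
    ← sum_range_sum_Ioo_eq_sum_range_nsmul, ← sum_sub_distrib]
  have hblock : ∀ k ∈ range K, ∑ n ∈ range N, ∑ j ∈ Ioo (k * N + n) (K * N), f j
      - ∑ n ∈ range N, ∑ i ∈ Icc (k * N + 1) ((K - 1) * N), f (n + i)
      = ∑ n ∈ range N, ∑ r ∈ Ioo n N, f ((K - 1) * N + r) := fun k hk => by
    rw [← sum_sub_distrib]
    exact sum_congr rfl fun n hn =>
      sum_Ioo_sub_sum_Icc_add_left f (mem_range.1 hk) (mem_range.1 hn)
  rw [sum_congr rfl hblock, sum_const, card_range]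

end Finset

theorem stmt_7_general (M K N α : ℕ) (hK : 0 < K)
    (hM : M = α * K * N) :
    (∑ j ∈ Finset.Icc 1 (K * N - 1), (j : ℝ) / ((M : ℝ) - (j : ℝ)))
      - (∑ k ∈ Finset.range K, ∑ n ∈ Finset.range N,
          ∑ i ∈ Finset.Icc (k * N + 1) ((K - 1) * N),
            (1 : ℝ) / ((M : ℝ) - (n : ℝ) - (i : ℝ)))
      = ∑ i ∈ Finset.Icc 1 (N - 1),
          ((K : ℝ) * ((N : ℝ) - (i : ℝ))) / (((α : ℝ) - 1) * K * N + (i : ℝ)) := by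
  set f : ℕ → ℝ := fun j => 1 / ((M : ℝ) - j)
  have hZF : ∑ j ∈ Icc 1 (K * N - 1), (j : ℝ) / ((M : ℝ) - j)
      = ∑ j ∈ range (K * N), j • f j := by
    rw [← sum_Icc_one_sub_one_nsmul]
    exact sum_congr rfl fun j _ => by rw [nsmul_eq_mul, mul_one_div]
  have hBD : ∀ n i : ℕ, (1 : ℝ) / ((M : ℝ) - n - i) = f (n + i) := fun n i => by
    simp only [f, Nat.cast_add, sub_add_eq_sub_sub]
  have hKN : (K - 1) * N + N = K * N := by
    rw [← Nat.succ_mul, Nat.succ_eq_add_one, Nat.sub_add_cancel hK]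
  have hterm : ∀ i ∈ Icc 1 (N - 1), (K : ℝ) * ((N - i : ℕ) * f ((K - 1) * N + (N - i)))
      = (K : ℝ) * ((N : ℝ) - i) / (((α : ℝ) - 1) * K * N + i) := fun i hi => by
    have hiN : i ≤ N := by simp only [mem_Icc] at hi; omega
    have hidx : (((K - 1) * N + (N - i) : ℕ) : ℝ) = K * N - i := by
      rw [eq_sub_iff_add_eq]
      exact_mod_cast (by omega : (K - 1) * N + (N - i) + i = K * N)
    simp only [f, hidx, Nat.cast_sub hiN, hM, Nat.cast_mul]
    ring
  simp only [hBD]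
  rw [hZF, sum_range_nsmul_sub_sum_blocks, sum_range_nsmul_eq_sum_Icc_reflect, smul_sum]
  exact sum_congr rfl fun i hi => by rw [nsmul_eq_mul, nsmul_eq_mul, hterm i hi]

/-- For positive integers `K, N` with `N > 1` and `M = αKN` for an integer `α > 1`,
the DPC–ZF offset minus the DPC–BD offset equals `∑_{i=1}^{N-1} K(N-i)/((α-1)KN + i)`. -/
theorem stmt_7 (M K N α : ℕ) (hK : 0 < K) (hN : 1 < N) (hα : 1 < α)
    (hM : M = α * K * N) :
    (∑ j ∈ Finset.Icc 1 (K * N - 1), (j : ℝ) / ((M : ℝ) - (j : ℝ)))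
      - (∑ k ∈ Finset.range K, ∑ n ∈ Finset.range N,
          ∑ i ∈ Finset.Icc (k * N + 1) ((K - 1) * N),
            (1 : ℝ) / ((M : ℝ) - (n : ℝ) - (i : ℝ)))
      = ∑ i ∈ Finset.Icc 1 (N - 1),
          ((K : ℝ) * ((N : ℝ) - (i : ℝ))) / (((α : ℝ) - 1) * K * N + (i : ℝ)) :=
  stmt_7_general M K N α hK hM
end

section
/- When M = KN (α = 1 limit of the BD–ZF gap formula taken directly), ∑_{j=1}^{KN-1} j/(KN-j) - ∑_{k=0}^{K-1} ∑_{n=0}^{N-1} ∑_{i=kN+1}^{(K-1)N} 1/(KN-n-i) = K·∑_{j=1}^{N-1} (N-j)/j, which depends on K only through the prefactor K and when normalized by KN gives (1/N)·∑_{j=1}^{N-1} (N-j)/j, independent of K. -/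
/-!
Write `G m = ∑_{t<m} H_t` with `H_t` the harmonic numbers. Counting how often each `1/d` occurs,
`∑_{j=1}^{m-1} (m-j)/j = G m`, and reflecting `j ↦ m - j` gives the same for `∑ j/(m-j)`.
Each innermost sum over `i` is `H_{(K-k)N-n-1} - H_{N-n-1}`, and as `(k, n)` runs over
`[0, K) × [0, N)` the index `(K-k)N-n-1` runs over `[0, KN)` exactly once. So the triple sum is
`G (KN) - K G N`, and the difference is `K G N = K ∑_{j=1}^{N-1} (N-j)/j`.
-/

open Finset

lemma cast_harmonic_eq_sum_range (n : ℕ) :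
    (harmonic n : ℝ) = ∑ j ∈ range n, 1 / ((j : ℝ) + 1) := by
  simp [harmonic]

lemma sum_Icc_sub_div_eq_sum_range_harmonic (m : ℕ) :
    ∑ j ∈ Icc 1 m, ((m : ℝ) - j) / j = ∑ t ∈ range m, (harmonic t : ℝ) := by
  induction m with
  | zero => simp
  | succ m ih =>
    rw [sum_Icc_succ_top (by omega), sum_range_succ, ← ih, harmonic_eq_sum_Icc, sub_self,
      zero_div, add_zero, Rat.cast_sum, ← sum_add_distrib]
    refine sum_congr rfl fun j hj => ?_
    have hj0 : (j : ℝ) ≠ 0 := Nat.cast_ne_zero.mpr (by simp at hj; omega)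
    push_cast
    field_simp
    ring

lemma sum_Icc_pred_sub_div_eq_sum_range_harmonic (m : ℕ) :
    ∑ j ∈ Icc 1 (m - 1), ((m : ℝ) - j) / j = ∑ t ∈ range m, (harmonic t : ℝ) := by
  rcases m with _ | m
  · simp
  · rw [← sum_Icc_sub_div_eq_sum_range_harmonic, sum_Icc_succ_top (by omega)]
    simp

lemma sum_Icc_pred_div_sub_eq_sum_range_harmonic (m : ℕ) :
    ∑ j ∈ Icc 1 (m - 1), (j : ℝ) / ((m : ℝ) - j) = ∑ t ∈ range m, (harmonic t : ℝ) := by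
  rw [← sum_Icc_pred_sub_div_eq_sum_range_harmonic]
  refine sum_nbij' (fun j => m - j) (fun j => m - j) ?_ ?_ ?_ ?_ ?_ <;>
    intro j hj <;> simp only [mem_Icc] at hj ⊢
  any_goals omega
  rw [Nat.cast_sub (by omega), sub_sub_cancel]

lemma sum_Icc_one_div_sub_eq_harmonic_sub (a b c : ℕ) (hab : a ≤ b) (hbc : b < c) :
    ∑ i ∈ Icc (a + 1) b, 1 / ((c : ℝ) - i) = harmonic (c - 1 - a) - harmonic (c - 1 - b) := by
  rw [cast_harmonic_eq_sum_range, cast_harmonic_eq_sum_range, ← sum_Ico_eq_sub _ (by omega),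
    ← Ico_add_one_right_eq_Icc]
  have hreflect := sum_Ico_reflect (fun j => 1 / ((j : ℝ) + 1)) (a + 1) (n := c - 1)
    (m := b + 1) (by omega)
  rw [show c - 1 + 1 - (b + 1) = c - 1 - b by omega,
    show c - 1 + 1 - (a + 1) = c - 1 - a by omega] at hreflect
  rw [← hreflect]
  refine sum_congr rfl fun i hi => ?_
  simp only [mem_Ico] at hi
  rw [Nat.cast_sub (by omega), Nat.cast_sub (by omega)]
  push_cast
  ring

section Blocks

variable {M : Type*} [AddCommMonoid M]

lemma sum_range_mul_eq_sum_sum (f : ℕ → M) (K N : ℕ) :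
    ∑ t ∈ range (K * N), f t = ∑ k ∈ range K, ∑ n ∈ range N, f (k * N + n) := by
  induction K with
  | zero => simp
  | succ K ih => rw [Nat.succ_mul, sum_range_add, ih, sum_range_succ]

lemma sum_sum_reflect_eq_sum_range_mul (f : ℕ → M) (K N : ℕ) :
    ∑ k ∈ range K, ∑ n ∈ range N, f ((K - k) * N - n - 1) = ∑ t ∈ range (K * N), f t := by
  rw [sum_range_mul_eq_sum_sum, ← sum_range_reflect]
  refine sum_congr rfl fun k hk => ?_
  rw [← sum_range_reflect]
  refine sum_congr rfl fun n hn => ?_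
  simp only [mem_range] at hk hn
  rw [show K - (K - 1 - k) = k + 1 by omega, Nat.succ_mul]
  congr 1
  omega

end Blocks

lemma sum_range_sum_range_sum_Icc_one_div (K N : ℕ) :
    ∑ k ∈ range K, ∑ n ∈ range N, ∑ i ∈ Icc (k * N + 1) ((K - 1) * N),
        1 / ((K * N : ℝ) - n - i)
      = ∑ t ∈ range (K * N), (harmonic t : ℝ) - K * ∑ t ∈ range N, (harmonic t : ℝ) := by
  have hblock : ∀ k ∈ range K, ∀ n ∈ range N,
      ∑ i ∈ Icc (k * N + 1) ((K - 1) * N), 1 / ((K * N : ℝ) - n - i)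
        = harmonic ((K - k) * N - n - 1) - harmonic (N - n - 1) := by
    intro k hk n hn
    simp only [mem_range] at hk hn
    have hK : (K - 1) * N + N = K * N := by
      rw [← Nat.succ_mul, Nat.succ_eq_add_one, Nat.sub_add_cancel (by omega)]
    have hk' : (K - k) * N + k * N = K * N := by rw [← Nat.add_mul, Nat.sub_add_cancel hk.le]
    have hkK : k * N ≤ (K - 1) * N := Nat.mul_le_mul_right _ (by omega)
    have hc : ((K * N - n : ℕ) : ℝ) = K * N - n := by
      push_cast [Nat.cast_sub (by omega : n ≤ K * N)]
      ring
    rw [← hc, sum_Icc_one_div_sub_eq_harmonic_sub _ _ _ hkK (by omega)]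
    congr 3 <;> omega
  rw [sum_congr rfl fun k hk => sum_congr rfl (hblock k hk)]
  simp only [sum_sub_distrib, sum_const, card_range, nsmul_eq_mul]
  rw [sum_sum_reflect_eq_sum_range_mul (fun t => (harmonic t : ℝ))]
  congr 2
  rw [← sum_range_reflect (fun t => (harmonic t : ℝ))]
  exact sum_congr rfl fun n _ => by rw [Nat.sub_right_comm]

theorem stmt_8_general (K N : ℕ) (hK : 0 < K) :
    (∑ j ∈ Finset.Icc 1 (K * N - 1), (j : ℝ) / ((K * N : ℝ) - (j : ℝ)))
        - (∑ k ∈ Finset.range K, ∑ n ∈ Finset.range N,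
            ∑ i ∈ Finset.Icc (k * N + 1) ((K - 1) * N),
              (1 : ℝ) / ((K * N : ℝ) - (n : ℝ) - (i : ℝ)))
      = (K : ℝ) * ∑ j ∈ Finset.Icc 1 (N - 1), ((N : ℝ) - (j : ℝ)) / (j : ℝ) ∧
    ((K : ℝ) * ∑ j ∈ Finset.Icc 1 (N - 1), ((N : ℝ) - (j : ℝ)) / (j : ℝ)) / ((K : ℝ) * N)
      = (1 / (N : ℝ)) * ∑ j ∈ Finset.Icc 1 (N - 1), ((N : ℝ) - (j : ℝ)) / (j : ℝ) := by
  constructor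
  · have hfirst := sum_Icc_pred_div_sub_eq_sum_range_harmonic (K * N)
    push_cast at hfirst
    rw [hfirst, sum_range_sum_range_sum_Icc_one_div, sum_Icc_pred_sub_div_eq_sum_range_harmonic]
    ring
  · have hK0 : (K : ℝ) ≠ 0 := Nat.cast_ne_zero.mpr hK.ne'
    rw [mul_div_mul_left _ _ hK0, one_div_mul_eq_div]

/-- When `M = KN`, the BD–ZF expected throughput gap equals `K ∑_{j=1}^{N-1} (N-j)/j`,
and normalized by `KN` it equals `(1/N) ∑_{j=1}^{N-1} (N-j)/j`, independent of `K`. -/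
theorem stmt_8 (K N : ℕ) (hK : 0 < K) (hN : 0 < N) :
    (∑ j ∈ Finset.Icc 1 (K * N - 1), (j : ℝ) / ((K * N : ℝ) - (j : ℝ)))
        - (∑ k ∈ Finset.range K, ∑ n ∈ Finset.range N,
            ∑ i ∈ Finset.Icc (k * N + 1) ((K - 1) * N),
              (1 : ℝ) / ((K * N : ℝ) - (n : ℝ) - (i : ℝ)))
      = (K : ℝ) * ∑ j ∈ Finset.Icc 1 (N - 1), ((N : ℝ) - (j : ℝ)) / (j : ℝ) ∧
    ((K : ℝ) * ∑ j ∈ Finset.Icc 1 (N - 1), ((N : ℝ) - (j : ℝ)) / (j : ℝ)) / ((K : ℝ) * N)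
      = (1 / (N : ℝ)) * ∑ j ∈ Finset.Icc 1 (N - 1), ((N : ℝ) - (j : ℝ)) / (j : ℝ) :=
  stmt_8_general K N hK
end

section
/- With g_k, μ_k, P_k* as in the parallel-channel KKT solution, lim_{P→∞} [∑_k μ_k log(1 + P_k* g_k) - ∑_k μ_k log(1 + μ_k P g_k)] = 0; i.e., allocating power directly proportional to the weights (P_k = μ_k P) asymptotically achieves the maximum weighted sum rate. -/
open Finset Filter

lemma aux_ratio (a S : ℝ) (ha : 0 < a) :
    Tendsto (fun P : ℝ => a * (P + S) / (1 + a * P)) atTop (nhds 1) := by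
  have hden : Tendsto (fun P : ℝ => 1 + a * P) atTop atTop :=
    tendsto_atTop_add_const_left _ _ (tendsto_id.const_mul_atTop ha)
  have h0 : Tendsto (fun P : ℝ => (a * S - 1) / (1 + a * P)) atTop (nhds 0) :=
    tendsto_const_nhds.div_atTop hden
  have h1 : Tendsto (fun P : ℝ => 1 + (a * S - 1) / (1 + a * P)) atTop (nhds (1 + 0)) :=
    tendsto_const_nhds.add h0
  rw [add_zero] at h1
  refine h1.congr' ?_
  filter_upwards [hden.eventually_gt_atTop 0] with P hP
  field_simp
  ring

lemma aux_log (a S : ℝ) (ha : 0 < a) :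
    Tendsto (fun P : ℝ => Real.log (a * (P + S)) - Real.log (1 + a * P)) atTop (nhds 0) := by
  have := ((Real.continuousAt_log one_ne_zero).tendsto.comp (aux_ratio a S ha))
  rw [Real.log_one] at this
  refine this.congr' ?_
  filter_upwards [eventually_gt_atTop 0, eventually_gt_atTop (-S)] with P hP hPS
  have h1 : 0 < a * (P + S) := mul_pos ha (by linarith)
  have h2 : 0 < 1 + a * P := by positivity
  simp [Function.comp, Real.log_div h1.ne' h2.ne']

/-- Allocating power proportional to the weights (`P_k = μ_k P`) asymptotically achieves
the weighted sum rate of the KKT-optimal allocation `P_k*` as `P → ∞`. -/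
theorem stmt_12 (K : ℕ) (g μ : Fin K → ℝ) (hg : ∀ k, 0 < g k) (hμ : ∀ k, 0 < μ k)
    (hμsum : ∑ k, μ k = 1) :
    Tendsto
      (fun P : ℝ =>
        (∑ k, μ k * Real.log (1 + (μ k * P + μ k * (∑ i, 1 / g i) - 1 / g k) * g k))
          - ∑ k, μ k * Real.log (1 + μ k * P * g k))
      atTop (nhds 0) := by
  have key : ∀ k : Fin K,
      Tendsto (fun P : ℝ => μ k * Real.log (1 + (μ k * P + μ k * (∑ i, 1 / g i) - 1 / g k) * g k)
        - μ k * Real.log (1 + μ k * P * g k)) atTop (nhds 0) := by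
    intro k
    have h := (aux_log (μ k * g k) (∑ i, 1 / g i) (mul_pos (hμ k) (hg k))).const_mul (μ k)
    rw [mul_zero] at h
    refine h.congr ?_
    intro P
    have hgk := (hg k).ne'
    rw [mul_sub]
    congr 2
    · congr 1
      field_simp
      ring
    · ring_nf
  have := tendsto_finset_sum Finset.univ (fun k _ => key k)
  simp only [Finset.sum_const_zero] at this
  refine this.congr ?_
  intro P
  rw [Finset.sum_sub_distrib]
end

section
/- Let g_1, ..., g_m be positive reals. Then lim_{P→∞} [ max_{(P_k): P_k ≥ 0, ∑P_k ≤ P} ∑_{k=1}^m log(1 + P_k g_k) - ∑_{k=1}^m log(1 + (P/m) g_k) ] = 0; i.e., uniform power allocation is asymptotically optimal for sum rate over parallel channels. -/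
open Finset Filter Real Topology

/-!
For large power the optimum is the waterfilling allocation `Q k = ν - (g k)⁻¹` at the water
level `ν = (P + ∑ k, (g k)⁻¹) / m`, whose sum rate is `∑ k, log (ν g k)`; concavity of `log`
(`log y ≤ log z + y / z - 1`) shows that this value bounds every feasible sum rate, for every
`P ≥ 0`. Squeezing the gap between the optimum and the uniform allocation `P / m` thus leaves
`∑ k, (log (ν g k) - log (1 + P g k / m))`, and each term is `log (x + a) - log (x + b)` with
`x = P g k / m → ∞`, hence tends to `0`.
-/

namespace Real

lemma log_le_log_add_div_sub_one {y z : ℝ} (hy : 0 < y) (hz : 0 < z) :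
    log y ≤ log z + y / z - 1 := by
  have h := log_le_sub_one_of_pos (div_pos hy hz)
  rw [log_div hy.ne' hz.ne'] at h
  linarith

lemma tendsto_log_add_sub_log_add (a b : ℝ) :
    Tendsto (fun x => log (x + a) - log (x + b)) atTop (𝓝 0) := by
  simpa only [sub_sub_sub_cancel_right, sub_self] using
    (tendsto_log_comp_add_sub_log a).sub (tendsto_log_comp_add_sub_log b)

end Real

section ParallelChannels

variable {ι : Type*} [Fintype ι]

noncomputable def sumRate (g Q : ι → ℝ) : ℝ := ∑ k, log (1 + Q k * g k)

/-- The value is `0` when `P < 0`, since `sSup ∅ = 0` in `ℝ`. -/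
noncomputable def maxSumRate (g : ι → ℝ) (P : ℝ) : ℝ :=
  ⨆ (Q : ι → ℝ) (_ : ∀ k, 0 ≤ Q k) (_ : ∑ k, Q k ≤ P), sumRate g Q

noncomputable def waterLevel (g : ι → ℝ) (P : ℝ) : ℝ :=
  (P + ∑ k, (g k)⁻¹) / Fintype.card ι

variable {g : ι → ℝ}

lemma sumRate_nonneg (hg : ∀ k, 0 ≤ g k) {Q : ι → ℝ} (hQ : ∀ k, 0 ≤ Q k) : 0 ≤ sumRate g Q :=
  sum_nonneg fun k _ => log_nonneg (le_add_of_nonneg_right (mul_nonneg (hQ k) (hg k)))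

variable [Nonempty ι]

lemma waterLevel_pos (hg : ∀ k, 0 < g k) {P : ℝ} (hP : 0 ≤ P) : 0 < waterLevel g P := by
  have hS : 0 < ∑ k, (g k)⁻¹ := sum_pos (fun k _ => inv_pos.2 (hg k)) univ_nonempty
  unfold waterLevel
  positivity

lemma sumRate_le_sum_log_waterLevel (hg : ∀ k, 0 < g k) {P : ℝ} {Q : ι → ℝ}
    (hQ : ∀ k, 0 ≤ Q k) (hQP : ∑ k, Q k ≤ P) :
    sumRate g Q ≤ ∑ k, log (waterLevel g P * g k) := by
  set ν := waterLevel g P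
  have hν : 0 < ν := waterLevel_pos hg ((sum_nonneg fun k _ => hQ k).trans hQP)
  have hνn : ν * Fintype.card ι = P + ∑ k, (g k)⁻¹ :=
    div_mul_cancel₀ _ (Nat.cast_ne_zero.2 Fintype.card_ne_zero)
  have hterm (k : ι) : log (1 + Q k * g k) ≤ log (ν * g k) + ((g k)⁻¹ + Q k) / ν - 1 := by
    have h := log_le_log_add_div_sub_one
      (add_pos_of_pos_of_nonneg one_pos (mul_nonneg (hQ k) (hg k).le)) (mul_pos hν (hg k))
    have hk : (1 + Q k * g k) / (ν * g k) = ((g k)⁻¹ + Q k) / ν := by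
      field_simp [(hg k).ne']
    rwa [hk] at h
  calc sumRate g Q ≤ ∑ k, (log (ν * g k) + ((g k)⁻¹ + Q k) / ν - 1) :=
        sum_le_sum fun k _ => hterm k
    _ = ∑ k, log (ν * g k) + ((∑ k, (g k)⁻¹ + ∑ k, Q k) / ν - Fintype.card ι) := by
      simp only [sum_sub_distrib, sum_add_distrib, ← sum_div, sum_const, card_univ,
        nsmul_eq_mul, mul_one]
      ring
    _ ≤ ∑ k, log (ν * g k) := by
      have : (∑ k, (g k)⁻¹ + ∑ k, Q k) / ν ≤ Fintype.card ι := by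
        rw [div_le_iff₀ hν]
        linarith
      linarith

lemma sum_const_div_card (P : ℝ) : ∑ _k : ι, P / Fintype.card ι = P := by
  rw [sum_const, card_univ, nsmul_eq_mul,
    mul_div_cancel₀ _ (Nat.cast_ne_zero.2 Fintype.card_ne_zero)]

lemma sum_log_waterLevel_nonneg (hg : ∀ k, 0 < g k) {P : ℝ} (hP : 0 ≤ P) :
    0 ≤ ∑ k, log (waterLevel g P * g k) := by
  have hu : ∀ k : ι, 0 ≤ P / Fintype.card ι := fun _ => by positivity
  exact (sumRate_nonneg (fun k => (hg k).le) hu).trans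
    (sumRate_le_sum_log_waterLevel hg hu (sum_const_div_card P).le)

lemma iSup_feasible_sumRate_le (hg : ∀ k, 0 < g k) {P : ℝ} (hP : 0 ≤ P) (Q : ι → ℝ) :
    ⨆ (_ : ∀ k, 0 ≤ Q k) (_ : ∑ k, Q k ≤ P), sumRate g Q ≤
      ∑ k, log (waterLevel g P * g k) :=
  have hB := sum_log_waterLevel_nonneg hg hP
  Real.iSup_le (fun hQ => Real.iSup_le (fun hQP => sumRate_le_sum_log_waterLevel hg hQ hQP) hB) hB

lemma maxSumRate_le_sum_log_waterLevel (hg : ∀ k, 0 < g k) {P : ℝ} (hP : 0 ≤ P) :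
    maxSumRate g P ≤ ∑ k, log (waterLevel g P * g k) :=
  Real.iSup_le (iSup_feasible_sumRate_le hg hP) (sum_log_waterLevel_nonneg hg hP)

lemma sumRate_uniform_le_maxSumRate (hg : ∀ k, 0 < g k) {P : ℝ} (hP : 0 ≤ P) :
    sumRate g (fun _ => P / Fintype.card ι) ≤ maxSumRate g P := by
  have hu : ∀ k : ι, 0 ≤ P / Fintype.card ι := fun _ => by positivity
  have hbdd : BddAbove (Set.range fun Q : ι → ℝ =>
      ⨆ (_ : ∀ k, 0 ≤ Q k) (_ : ∑ k, Q k ≤ P), sumRate g Q) :=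
    ⟨_, Set.forall_mem_range.2 (iSup_feasible_sumRate_le hg hP)⟩
  calc sumRate g (fun _ => P / Fintype.card ι)
      = ⨆ (_ : ∀ k : ι, 0 ≤ P / Fintype.card ι) (_ : ∑ _k : ι, P / Fintype.card ι ≤ P),
          sumRate g (fun _ => P / Fintype.card ι) := by
        rw [ciSup_pos hu, ciSup_pos (sum_const_div_card P).le]
    _ ≤ maxSumRate g P := le_ciSup hbdd (fun _ => P / Fintype.card ι)

lemma tendsto_sum_log_waterLevel_sub_sumRate_uniform (hg : ∀ k, 0 < g k) :
    Tendsto (fun P => ∑ k, log (waterLevel g P * g k) - sumRate g (fun _ => P / Fintype.card ι))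
      atTop (𝓝 0) := by
  have hn : (0 : ℝ) < Fintype.card ι := Nat.cast_pos.2 Fintype.card_pos
  have hterm (k : ι) : Tendsto (fun P => log (waterLevel g P * g k) -
      log (1 + P / Fintype.card ι * g k)) atTop (𝓝 0) := by
    have hx : Tendsto (fun P : ℝ => P / Fintype.card ι * g k) atTop atTop :=
      (tendsto_id.atTop_div_const hn).atTop_mul_const (hg k)
    refine ((tendsto_log_add_sub_log_add ((∑ j, (g j)⁻¹) / Fintype.card ι * g k) 1).comp hx).congr
      fun P => ?_
    simp only [Function.comp_apply, waterLevel]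
    ring_nf
  simpa only [sumRate, sum_sub_distrib, sum_const_zero] using
    tendsto_finsetSum univ fun k _ => hterm k

theorem tendsto_maxSumRate_sub_sumRate_uniform (hg : ∀ k, 0 < g k) :
    Tendsto (fun P => maxSumRate g P - sumRate g (fun _ => P / Fintype.card ι)) atTop (𝓝 0) := by
  refine squeeze_zero' ?_ ?_ (tendsto_sum_log_waterLevel_sub_sumRate_uniform hg)
  · filter_upwards [eventually_ge_atTop 0] with P hP
    exact sub_nonneg.2 (sumRate_uniform_le_maxSumRate hg hP)
  · filter_upwards [eventually_ge_atTop 0] with P hP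
    exact sub_le_sub_right (maxSumRate_le_sum_log_waterLevel hg hP) _

end ParallelChannels

/-- Uniform power allocation is asymptotically optimal for sum rate over parallel
Gaussian channels: the waterfilling optimum minus the uniform-power sum rate tends
to `0` as `P → ∞`. -/
theorem stmt_16 (m : ℕ) (hm : 0 < m) (g : Fin m → ℝ) (hg : ∀ k, 0 < g k) :
    Tendsto
      (fun P : ℝ =>
        (⨆ (Q : Fin m → ℝ) (_ : ∀ k, 0 ≤ Q k) (_ : (∑ k, Q k) ≤ P),
            ∑ k, Real.log (1 + Q k * g k))
          - ∑ k, Real.log (1 + (P / m) * g k))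
      atTop (nhds 0) := by
  have : Nonempty (Fin m) := ⟨⟨0, hm⟩⟩
  have h := tendsto_maxSumRate_sub_sumRate_uniform hg
  rwa [Fintype.card_fin] at h
end

section
/- Let H be an m×n complex matrix (m ≤ n) and Γ = diag(γ_1,...,γ_m) with all γ_k > 0. Then lim_{P→∞} [ log det(I + (P/m)·Γ·H H^H) - log det(I + (P/m)·H H^H) - ∑_{k=1}^m log γ_k ] = 0, provided H H^H is positive definite. -/
open Matrix Filter Finset
open scoped ComplexOrder Topology

/-! Pulling the factor `c` out of `I + c N` gives `det (I + c N) = c ^ m det (c⁻¹ I + N)`, so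
`log det (I + c N) = m log c + log det N + o(1)` as `c → ∞` whenever `det N > 0`. The terms
`m log c` cancel in the difference of the two rates, and
`log det (Γ H Hᴴ) - log det (H Hᴴ) = log det Γ = ∑ k, log γ k`. -/

lemma Matrix.det_one_add_smul_eq_pow_mul {K n : Type*} [Field K] [Fintype n] [DecidableEq n]
    (N : Matrix n n K) {c : K} (hc : c ≠ 0) :
    (1 + c • N).det = c ^ Fintype.card n * (c⁻¹ • 1 + N).det := by
  rw [← det_smul, smul_add, smul_smul, mul_inv_cancel₀ hc, one_smul]

lemma Matrix.tendsto_det_smul_one_add {R n : Type*} [CommRing R] [TopologicalSpace R]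
    [IsTopologicalRing R] [Fintype n] [DecidableEq n] (N : Matrix n n R) :
    Tendsto (fun t : R => (t • 1 + N).det) (𝓝 0) (𝓝 N.det) := by
  have hcont : Continuous fun t : R => (t • 1 + N).det := by fun_prop
  simpa using hcont.tendsto 0

lemma Matrix.tendsto_log_re_det_one_add_smul_sub {n : Type*} [Fintype n] [DecidableEq n]
    (N : Matrix n n ℂ) (hN : 0 < N.det.re) :
    Tendsto (fun c : ℝ => Real.log (1 + (c : ℂ) • N).det.re - Fintype.card n * Real.log c)
      atTop (𝓝 (Real.log N.det.re)) := by
  have hinv : Tendsto (fun c : ℝ => ((c⁻¹ : ℝ) : ℂ)) atTop (𝓝 0) :=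
    (Complex.continuous_ofReal.tendsto' 0 0 Complex.ofReal_zero).comp tendsto_inv_atTop_zero
  have hdet : Tendsto (fun c : ℝ => (((c⁻¹ : ℝ) : ℂ) • 1 + N).det.re) atTop (𝓝 N.det.re) :=
    (Complex.continuous_re.tendsto _).comp ((tendsto_det_smul_one_add N).comp hinv)
  refine ((Real.continuousAt_log hN.ne').tendsto.comp hdet).congr' ?_
  filter_upwards [hdet.eventually (eventually_gt_nhds hN), eventually_gt_atTop 0]
    with c hpos hc
  have hfactor : (1 + (c : ℂ) • N).det.re
      = c ^ Fintype.card n * (((c⁻¹ : ℝ) : ℂ) • 1 + N).det.re := by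
    rw [det_one_add_smul_eq_pow_mul N (Complex.ofReal_ne_zero.mpr hc.ne'), ← Complex.ofReal_inv,
      ← Complex.ofReal_pow, Complex.re_ofReal_mul]
  rw [Function.comp_apply, hfactor, Real.log_mul (pow_pos hc _).ne' hpos.ne', Real.log_pow]
  ring

theorem stmt_17_general (m n : ℕ) (hm : 0 < m)
    (H : Matrix (Fin m) (Fin n) ℂ) (hH : (H * H.conjTranspose).PosDef)
    (γ : Fin m → ℝ) (hγ : ∀ k, 0 < γ k) :
    Tendsto
      (fun P : ℝ =>
        Real.log ((1 + ((P / m : ℝ) : ℂ) •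
              (Matrix.diagonal (fun k => (γ k : ℂ)) * (H * H.conjTranspose))).det.re)
          - Real.log ((1 + ((P / m : ℝ) : ℂ) • (H * H.conjTranspose)).det.re)
          - ∑ k, Real.log (γ k))
      atTop (nhds 0) := by
  set M := H * H.conjTranspose
  set Γ := Matrix.diagonal fun k => (γ k : ℂ)
  have hM : 0 < M.det.re := (Complex.pos_iff.mp hH.det_pos).1
  have hprod : 0 < ∏ k, γ k := prod_pos fun k _ => hγ k
  have hΓM : (Γ * M).det.re = (∏ k, γ k) * M.det.re := by
    rw [det_mul, det_diagonal, ← Complex.ofReal_prod, Complex.re_ofReal_mul]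
  have hSNR : Tendsto (fun P : ℝ => P / m) atTop atTop :=
    tendsto_id.atTop_div_const (Nat.cast_pos.mpr hm)
  have hlim := (((tendsto_log_re_det_one_add_smul_sub (Γ * M) (hΓM ▸ mul_pos hprod hM)).sub
    (tendsto_log_re_det_one_add_smul_sub M hM)).comp hSNR).sub_const (∑ k, Real.log (γ k))
  rw [hΓM, Real.log_mul hprod.ne' hM.ne', Real.log_prod fun k _ => (hγ k).ne'] at hlim
  convert hlim using 2 with P
  · simp only [Function.comp_apply]
    ring
  · ring

/-- Asymmetric average SNRs `γ_k` shift the high-SNR sum rate by `∑_k log γ_k`: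
`log det(I + (P/m) Γ H Hᴴ) - log det(I + (P/m) H Hᴴ) - ∑_k log γ_k → 0` as `P → ∞`. -/
theorem stmt_17 (m n : ℕ) (hm : 0 < m) (hmn : m ≤ n)
    (H : Matrix (Fin m) (Fin n) ℂ) (hH : (H * H.conjTranspose).PosDef)
    (γ : Fin m → ℝ) (hγ : ∀ k, 0 < γ k) :
    Tendsto
      (fun P : ℝ =>
        Real.log ((1 + ((P / m : ℝ) : ℂ) •
              (Matrix.diagonal (fun k => (γ k : ℂ)) * (H * H.conjTranspose))).det.re)
          - Real.log ((1 + ((P / m : ℝ) : ℂ) • (H * H.conjTranspose)).det.re)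
          - ∑ k, Real.log (γ k))
      atTop (nhds 0) :=
  stmt_17_general m n hm H hH γ hγ
end
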